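/- Suppose either (d = 1 or d = 2) and κ > 0, or d ≥ 3 and 0 < κ < κ_c. Then there exists a unique m > 0 such that ∫_{[0,1)^d} dk / ( m + 2 Σ_{j=1}^d (1 − cos(2π k_j)) ) = 4κ. (The map m ↦ ∫_{[0,1)^d} dk/(m + 2Σ_j(1−cos 2πk_j)) is strictly decreasing and continuous on (0,∞), tends to 0 as m → ∞, and tends to +∞ as m → 0⁺ when d ≤ 2, respectively to 4κ_c when d ≥ 3.) -/

import Mathlib

noncomputable section
open MeasureTheory

/-- The critical inverse temperature
`κ_c = (1/4) ∫_{(0,1)^d} dk / (2 Σ_j (1 − cos(2π k_j)))` (finite for `d ≥ 3`). -/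
def kcrit (d : ℕ) : ℝ :=
  (1 / 4) * ∫ k in Set.univ.pi fun _ : Fin d => Set.Ioo (0 : ℝ) 1,
    (2 * ∑ j : Fin d, (1 - Real.cos (2 * Real.pi * k j)))⁻¹

namespace Stmt12Aux

open Real Set Filter Topology ENNReal
open scoped ENNReal

def g (d : ℕ) (k : Fin d → ℝ) : ℝ := 2 * ∑ j : Fin d, (1 - Real.cos (2 * Real.pi * k j))
def Om (d : ℕ) : Set (Fin d → ℝ) := Set.univ.pi fun _ : Fin d => Set.Ico (0:ℝ) 1
def Omo (d : ℕ) : Set (Fin d → ℝ) := Set.univ.pi fun _ : Fin d => Set.Ioo (0:ℝ) 1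

lemma g_nonneg (d : ℕ) (k : Fin d → ℝ) : 0 ≤ g d k := by
  apply mul_nonneg (by norm_num)
  exact Finset.sum_nonneg fun j _ => sub_nonneg.2 (Real.cos_le_one _)

lemma g_cont (d : ℕ) : Continuous (g d) := by
  unfold g
  exact continuous_const.mul (continuous_finset_sum _ fun j _ =>
    continuous_const.sub (Real.continuous_cos.comp (continuous_const.mul (continuous_apply j))))

lemma one_sub_cos_pos {x : ℝ} (hx : x ∈ Set.Ioo (0:ℝ) 1) :
    0 < 1 - Real.cos (2 * Real.pi * x) := by
  rcases hx with ⟨h0, h1⟩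
  have hne : Real.cos (2 * Real.pi * x) ≠ 1 := by
    intro hc
    rcases (Real.cos_eq_one_iff _).1 hc with ⟨n, hn⟩
    have hx' : (n : ℝ) = x := by
      have hπ : (2*Real.pi) ≠ 0 := by positivity
      have h2 : (2*Real.pi) * (n:ℝ) = (2*Real.pi) * x := by linarith [hn]
      exact mul_left_cancel₀ hπ h2
    have : (0:ℝ) < n := by rw [hx']; exact h0
    have h1' : (n:ℝ) < 1 := by rw [hx']; exact h1
    have : (1:ℤ) ≤ n := by exact_mod_cast this
    have : (1:ℝ) ≤ (n:ℝ) := by exact_mod_cast this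
    linarith
  have := lt_of_le_of_ne (Real.cos_le_one _) hne
  linarith

lemma one_sub_cos_le {x : ℝ} : 1 - Real.cos (2 * Real.pi * x) ≤ 2 * Real.pi^2 * x^2 := by
  have := Real.one_sub_sq_div_two_le_cos (x := 2 * Real.pi * x)
  nlinarith [Real.pi_pos]

lemma g_pos (d : ℕ) (hd : 1 ≤ d) {k : Fin d → ℝ} (hk : k ∈ Omo d) : 0 < g d k := by
  haveI : Nonempty (Fin d) := Fin.pos_iff_nonempty.mp hd
  apply _root_.mul_pos (by norm_num)
  exact Finset.sum_pos (fun j _ => one_sub_cos_pos (hk j (Set.mem_univ j)))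
    Finset.univ_nonempty

lemma vol_Om (d : ℕ) : volume (Om d) = 1 := by rw [Om, volume_pi_pi]; simp

lemma vol_Omo (d : ℕ) : volume (Omo d) = 1 := by rw [Omo, volume_pi_pi]; simp

lemma meas_Om (d : ℕ) : MeasurableSet (Om d) :=
  MeasurableSet.univ_pi fun _ => measurableSet_Ico

lemma meas_Omo (d : ℕ) : MeasurableSet (Omo d) :=
  MeasurableSet.univ_pi fun _ => measurableSet_Ioo

lemma Omo_subset (d : ℕ) : Omo d ⊆ Om d :=
  Set.pi_mono fun _ _ => Set.Ioo_subset_Ico_self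

lemma diff_null (d : ℕ) : volume (Om d \ Omo d) = 0 := by
  have := measure_diff (Omo_subset d) (meas_Omo d).nullMeasurableSet
    (by rw [vol_Omo]; exact ENNReal.one_ne_top)
  rw [this, vol_Om, vol_Omo, tsub_self]

lemma ae_eq_sets (d : ℕ) : Om d =ᵐ[volume] Omo d := by
  rw [MeasureTheory.ae_eq_set]
  exact ⟨diff_null d, by rw [Set.diff_eq_empty.2 (Omo_subset d)]; exact measure_empty⟩

lemma ae_mem_Omo (d : ℕ) : ∀ᵐ k ∂(volume.restrict (Om d)), k ∈ Omo d := by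
  refine (MeasureTheory.ae_restrict_iff' (meas_Om d)).2 ?_
  rw [MeasureTheory.ae_iff]
  refine measure_mono_null (fun k hk => ?_) (diff_null d)
  simp only [Set.mem_setOf_eq, Classical.not_imp] at hk
  exact hk

lemma integrable_fm (d : ℕ) {m : ℝ} (hm : 0 < m) :
    IntegrableOn (fun k => (m + g d k)⁻¹) (Om d) volume := by
  have hmeas : Measurable fun k => (m + g d k)⁻¹ :=
    (measurable_const.add (g_cont d).measurable).inv
  refine Integrable.mono' (g := fun _ => m⁻¹) ?_ hmeas.aestronglyMeasurable ?_
  · refine integrableOn_const ?_ enorm_ne_top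
    rw [vol_Om]; exact ENNReal.one_ne_top
  · refine Filter.Eventually.of_forall fun k => ?_
    have h1 : 0 < m + g d k := by linarith [g_nonneg d k]
    rw [Real.norm_eq_abs, abs_of_pos (inv_pos.2 h1)]
    exact inv_anti₀ hm (by linarith [g_nonneg d k])

def F (d : ℕ) (m : ℝ) : ℝ := ∫ k in Om d, (m + g d k)⁻¹

lemma F_anti (d : ℕ) : StrictAntiOn (F d) (Set.Ioi 0) := by
  intro a ha b hb hab
  have ha' : (0:ℝ) < a := ha
  have hb' : (0:ℝ) < b := hb
  have key : 0 < F d a - F d b := by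
    rw [F, F, ← integral_sub (integrable_fm d ha') (integrable_fm d hb')]
    refine (setIntegral_pos_iff_support_of_nonneg_ae ?_ ?_).2 ?_
    · refine Filter.Eventually.of_forall fun k => ?_
      have h0 := g_nonneg d k
      have : (b + g d k)⁻¹ < (a + g d k)⁻¹ := by
        apply inv_strictAnti₀ (by linarith) (by linarith)
      simp only [Pi.zero_apply]
      linarith
    · exact (integrable_fm d ha').sub (integrable_fm d hb')
    · have hsupp : Function.support (fun k => (a + g d k)⁻¹ - (b + g d k)⁻¹) = Set.univ := by
        ext k
        have h0 := g_nonneg d k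
        have : (b + g d k)⁻¹ < (a + g d k)⁻¹ := by
          apply inv_strictAnti₀ (by linarith) (by linarith)
        simp only [Function.mem_support, Set.mem_univ, iff_true]
        intro hc; rw [sub_eq_zero] at hc; linarith [hc]
      rw [hsupp, Set.univ_inter, vol_Om]; norm_num
  linarith

lemma F_contAt (d : ℕ) {m₀ : ℝ} (hm : 0 < m₀) : ContinuousAt (F d) m₀ := by
  refine MeasureTheory.continuousAt_of_dominated
    (bound := fun _ => (m₀/2)⁻¹)
    (Filter.Eventually.of_forall fun m =>
      ((measurable_const.add (g_cont d).measurable).inv).aestronglyMeasurable) ?_ ?_ ?_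
  · filter_upwards [eventually_gt_nhds (half_lt_self hm)] with m hm'
    refine Filter.Eventually.of_forall fun k => ?_
    have h0 := g_nonneg d k
    have h1 : 0 < m + g d k := by linarith [half_pos hm]
    rw [Real.norm_eq_abs, abs_of_pos (inv_pos.2 h1)]
    exact inv_anti₀ (half_pos hm) (by linarith)
  · refine integrableOn_const ?_ enorm_ne_top
    rw [vol_Om]; exact ENNReal.one_ne_top
  · refine Filter.Eventually.of_forall fun k => ?_
    have h0 := g_nonneg d k
    exact ((continuous_id.add continuous_const).continuousAt).inv₀ (by dsimp; linarith)

/-! ### The lower tail via `lintegral` -/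

def fn (d n : ℕ) (k : Fin d → ℝ) : ℝ≥0∞ := ENNReal.ofReal ((((n:ℝ)+1)⁻¹ + g d k)⁻¹)

def J (d : ℕ) : ℝ≥0∞ := ∫⁻ k in Om d, ENNReal.ofReal ((g d k)⁻¹)

lemma fn_meas (d n : ℕ) : Measurable (fn d n) :=
  ((measurable_const.add (g_cont d).measurable).inv).ennreal_ofReal

lemma fn_mono (d : ℕ) : Monotone (fn d) := by
  intro n m hnm k
  apply ENNReal.ofReal_le_ofReal
  have h0 := g_nonneg d k
  have h1 : ((m:ℝ)+1)⁻¹ ≤ ((n:ℝ)+1)⁻¹ := by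
    apply inv_anti₀ (by positivity)
    have : (n:ℝ) ≤ (m:ℝ) := by exact_mod_cast hnm
    linarith
  have h2 : 0 < ((m:ℝ)+1)⁻¹ := by positivity
  apply inv_anti₀ (by linarith) (by linarith)

lemma J_le_iSup (d : ℕ) (hd : 1 ≤ d) : J d ≤ ⨆ n, ∫⁻ k in Om d, fn d n k := by
  rw [← lintegral_iSup (fun n => fn_meas d n) (fun i j h k => fn_mono d h k)]
  apply lintegral_mono_ae
  filter_upwards [ae_mem_Omo d] with k hk
  have hg := g_pos d hd hk
  have hsup : (⨆ n, fn d n k) = ENNReal.ofReal ((g d k)⁻¹) := by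
    refine tendsto_nhds_unique (tendsto_atTop_iSup (fun i j h => fn_mono d h k)) ?_
    have h1 : Tendsto (fun n : ℕ => (((n:ℝ)+1)⁻¹ + g d k)⁻¹) atTop (𝓝 ((g d k)⁻¹)) := by
      have h2 : Tendsto (fun n : ℕ => ((n:ℝ)+1)⁻¹) atTop (𝓝 0) := by
        simpa [one_div] using tendsto_one_div_add_atTop_nhds_zero_nat (𝕜 := ℝ)
      have h3 : Tendsto (fun n : ℕ => ((n:ℝ)+1)⁻¹ + g d k) atTop (𝓝 (0 + g d k)) :=
        h2.add tendsto_const_nhds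
      rw [zero_add] at h3
      exact h3.inv₀ (ne_of_gt hg)
    exact (ENNReal.continuous_ofReal.continuousAt).tendsto.comp h1
  rw [hsup]

lemma fn_int_le (d n : ℕ) : ∫⁻ k in Om d, fn d n k ≤ ENNReal.ofReal ((n:ℝ)+1) := by
  calc ∫⁻ k in Om d, fn d n k ≤ ∫⁻ _ in Om d, ENNReal.ofReal ((n:ℝ)+1) := by
        apply lintegral_mono; intro k; apply ENNReal.ofReal_le_ofReal
        have h0 := g_nonneg d k
        have h2 : 0 < ((n:ℝ)+1)⁻¹ := by positivity
        calc (((n:ℝ)+1)⁻¹ + g d k)⁻¹ ≤ (((n:ℝ)+1)⁻¹)⁻¹ := inv_anti₀ h2 (by linarith)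
          _ = (n:ℝ)+1 := inv_inv _
    _ = ENNReal.ofReal ((n:ℝ)+1) := by
        rw [MeasureTheory.lintegral_const, Measure.restrict_apply_univ, vol_Om, mul_one]

lemma F_eq_lint (d : ℕ) (m : ℝ) (hm : 0 < m) :
    F d m = (∫⁻ k in Om d, ENNReal.ofReal ((m + g d k)⁻¹)).toReal := by
  rw [F, MeasureTheory.integral_eq_lintegral_of_nonneg_ae (f := fun k => (m + g d k)⁻¹)
    (Filter.Eventually.of_forall fun k => inv_nonneg.2 (by linarith [g_nonneg d k]))
    ((measurable_const.add (g_cont d).measurable).inv).aestronglyMeasurable]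

lemma exists_big (d : ℕ) (hd : 1 ≤ d) {C : ℝ} (hC : 0 ≤ C)
    (hCJ : ENNReal.ofReal C < J d) : ∃ m : ℝ, 0 < m ∧ C < F d m := by
  have h1 : ENNReal.ofReal C < ⨆ n, ∫⁻ k in Om d, fn d n k :=
    lt_of_lt_of_le hCJ (J_le_iSup d hd)
  rw [lt_iSup_iff] at h1
  obtain ⟨n, hn⟩ := h1
  have hm : (0:ℝ) < ((n:ℝ)+1)⁻¹ := by positivity
  refine ⟨((n:ℝ)+1)⁻¹, hm, ?_⟩
  have hfin : ∫⁻ k in Om d, fn d n k ≠ ⊤ :=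
    ne_top_of_le_ne_top ENNReal.ofReal_ne_top (fn_int_le d n)
  rw [F_eq_lint d _ hm]
  have : ENNReal.ofReal C < ∫⁻ k in Om d, ENNReal.ofReal ((((n:ℝ)+1)⁻¹ + g d k)⁻¹) := hn
  exact (ENNReal.ofReal_lt_iff_lt_toReal hC hfin).1 hn

lemma J_gt_of_kcrit (d : ℕ) (hd : 1 ≤ d) (h3 : 3 ≤ d) {κ : ℝ} (hκ : 0 < κ)
    (hlt : κ < kcrit d) : ENNReal.ofReal (4*κ) < J d := by
  rcases eq_or_ne (J d) ⊤ with hJ | hJ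
  · rw [hJ]; exact ENNReal.ofReal_lt_top
  · have hmeas : Measurable fun k : Fin d → ℝ => (g d k)⁻¹ := (g_cont d).measurable.inv
    have hnn : ∀ k, 0 ≤ (g d k)⁻¹ := fun k => inv_nonneg.2 (g_nonneg d k)
    have heq : ∫ k in Om d, (g d k)⁻¹ = (J d).toReal := by
      rw [J] at *
      exact MeasureTheory.integral_eq_lintegral_of_nonneg_ae
        (Filter.Eventually.of_forall hnn) hmeas.aestronglyMeasurable
    have hkc : 4 * kcrit d = ∫ k in Om d, (g d k)⁻¹ := by
      rw [kcrit]
      have : (∫ k in Omo d, (g d k)⁻¹) = ∫ k in Om d, (g d k)⁻¹ :=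
        MeasureTheory.setIntegral_congr_set (ae_eq_sets d).symm
      rw [show (Set.univ.pi fun _ : Fin d => Set.Ioo (0:ℝ) 1) = Omo d from rfl]
      rw [show (fun k : Fin d → ℝ =>
        (2 * ∑ j : Fin d, (1 - Real.cos (2 * Real.pi * k j)))⁻¹) = fun k => (g d k)⁻¹ from rfl]
      rw [this]; ring
    have h4 : 4*κ < (J d).toReal := by rw [← heq, ← hkc]; linarith
    exact (ENNReal.ofReal_lt_iff_lt_toReal (by linarith) hJ).2 h4

lemma lint_rpow_top {s : ℝ} (hs : s ≤ -1) :
    ∫⁻ x in Set.Ioo (0:ℝ) 1, ENNReal.ofReal (x ^ s) = ⊤ := by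
  by_contra hne
  have hcont : ContinuousOn (fun x : ℝ => x ^ s) (Set.Ioo 0 1) :=
    continuousOn_of_forall_continuousAt fun x hx =>
      Real.continuousAt_rpow_const x s (Or.inl (ne_of_gt hx.1))
  have hsm : AEStronglyMeasurable (fun x : ℝ => x ^ s)
      (volume.restrict (Set.Ioo (0:ℝ) 1)) :=
    hcont.aestronglyMeasurable measurableSet_Ioo
  have hnn : 0 ≤ᵐ[volume.restrict (Set.Ioo (0:ℝ) 1)] fun x : ℝ => x ^ s := by
    filter_upwards [self_mem_ae_restrict measurableSet_Ioo] with x hx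
    exact Real.rpow_nonneg (le_of_lt hx.1) s
  have hint := (MeasureTheory.lintegral_ofReal_ne_top_iff_integrable hsm hnn).1 hne
  have h2 : IntegrableOn (fun x : ℝ => x ^ s) (Set.Ioo (0:ℝ) 1) volume := hint
  rw [intervalIntegral.integrableOn_Ioo_rpow_iff zero_lt_one] at h2
  linarith

lemma rpow_neg_two_eq {x : ℝ} (hx : 0 < x) : x ^ (-2:ℝ) = (x^2)⁻¹ := by
  rw [show (-2:ℝ) = -((2:ℕ):ℝ) by norm_num, Real.rpow_neg hx.le, Real.rpow_natCast]

lemma rpow_neg_one_eq {x : ℝ} (hx : 0 < x) : x ^ (-1:ℝ) = x⁻¹ := by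
  rw [show (-1:ℝ) = -((1:ℕ):ℝ) by norm_num, Real.rpow_neg hx.le, Real.rpow_natCast, pow_one]

lemma J_top_d1 : J 1 = ⊤ := by
  have mp : MeasurePreserving (MeasurableEquiv.funUnique (Fin 1) ℝ).symm volume volume :=
    (volume_preserving_funUnique (Fin 1) ℝ).symm
  have htrans := mp.setLIntegral_comp_preimage_emb
    (MeasurableEquiv.funUnique (Fin 1) ℝ).symm.measurableEmbedding
    (fun k => ENNReal.ofReal ((g 1 k)⁻¹)) (Om 1)
  have hpre : (MeasurableEquiv.funUnique (Fin 1) ℝ).symm ⁻¹' (Om 1) = Set.Ico (0:ℝ) 1 := by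
    ext x
    simp [Om, MeasurableEquiv.funUnique, Equiv.funUnique, Set.mem_pi]
  rw [hpre] at htrans
  have key : ∀ x ∈ Set.Ioo (0:ℝ) 1,
      ENNReal.ofReal ((4*Real.pi^2)⁻¹) * ENNReal.ofReal (x ^ (-2:ℝ))
        ≤ ENNReal.ofReal ((g 1 ((MeasurableEquiv.funUnique (Fin 1) ℝ).symm x))⁻¹) := by
    intro x hx
    have hx0 : (0:ℝ) < x := hx.1
    have hgx : g 1 ((MeasurableEquiv.funUnique (Fin 1) ℝ).symm x)
        = 2*(1 - Real.cos (2*Real.pi*x)) := by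
      simp [g, Fin.sum_univ_one, MeasurableEquiv.funUnique, Equiv.funUnique]
    rw [hgx, ← ENNReal.ofReal_mul (by positivity)]
    apply ENNReal.ofReal_le_ofReal
    rw [rpow_neg_two_eq hx0, ← mul_inv]
    apply inv_anti₀ (_root_.mul_pos two_pos (one_sub_cos_pos hx))
    nlinarith [one_sub_cos_le (x := x)]
  have htop : ∫⁻ x in Set.Ico (0:ℝ) 1,
      ENNReal.ofReal ((g 1 ((MeasurableEquiv.funUnique (Fin 1) ℝ).symm x))⁻¹) = ⊤ := by
    rw [eq_top_iff]
    have hne : ENNReal.ofReal ((4*Real.pi^2)⁻¹) ≠ 0 := by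
      simp only [ne_eq, ENNReal.ofReal_eq_zero, not_le]; positivity
    calc (⊤:ℝ≥0∞) = ENNReal.ofReal ((4*Real.pi^2)⁻¹)
          * ∫⁻ x in Set.Ioo (0:ℝ) 1, ENNReal.ofReal (x ^ (-2:ℝ)) := by
          rw [lint_rpow_top (by norm_num : (-2:ℝ) ≤ -1), ENNReal.mul_top hne]
      _ = ∫⁻ x in Set.Ioo (0:ℝ) 1,
            ENNReal.ofReal ((4*Real.pi^2)⁻¹) * ENNReal.ofReal (x ^ (-2:ℝ)) :=
          (lintegral_const_mul' _ _ ENNReal.ofReal_ne_top).symm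
      _ ≤ ∫⁻ x in Set.Ioo (0:ℝ) 1,
            ENNReal.ofReal ((g 1 ((MeasurableEquiv.funUnique (Fin 1) ℝ).symm x))⁻¹) :=
          setLIntegral_mono' measurableSet_Ioo key
      _ ≤ _ := lintegral_mono_set Set.Ioo_subset_Ico_self
  have : ∫⁻ k in Om 1, ENNReal.ofReal ((g 1 k)⁻¹) = ⊤ := by rw [← htrans]; exact htop
  exact this

lemma J_top_d2 : J 2 = ⊤ := by
  have mp := (MeasureTheory.volume_preserving_finTwoArrow ℝ).symm
  have htrans := mp.setLIntegral_comp_preimage_emb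
    (MeasurableEquiv.finTwoArrow (α := ℝ)).symm.measurableEmbedding
    (fun k => ENNReal.ofReal ((g 2 k)⁻¹)) (Om 2)
  have hpre : (MeasurableEquiv.finTwoArrow (α := ℝ)).symm ⁻¹' (Om 2)
      = Set.Ico (0:ℝ) 1 ×ˢ Set.Ico (0:ℝ) 1 := by
    ext p
    simp [Om, MeasurableEquiv.finTwoArrow, Set.mem_pi, Fin.forall_fin_two]
  rw [hpre] at htrans
  have hgval : ∀ x y : ℝ, g 2 ((MeasurableEquiv.finTwoArrow (α := ℝ)).symm (x, y))
      = 2*((1 - Real.cos (2*Real.pi*x)) + (1 - Real.cos (2*Real.pi*y))) := by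
    intro x y
    simp [g, Fin.sum_univ_two, MeasurableEquiv.finTwoArrow]
    ring
  have htop : ∫⁻ p in Set.Ico (0:ℝ) 1 ×ˢ Set.Ico (0:ℝ) 1,
      ENNReal.ofReal ((g 2 ((MeasurableEquiv.finTwoArrow (α := ℝ)).symm p))⁻¹) = ⊤ := by
    rw [eq_top_iff]
    refine le_trans ?_
      (lintegral_mono_set (Set.prod_mono Set.Ioo_subset_Ico_self Set.Ioo_subset_Ico_self))
    have hmeasg : Measurable fun p : ℝ × ℝ =>
        ENNReal.ofReal ((g 2 ((MeasurableEquiv.finTwoArrow (α := ℝ)).symm p))⁻¹) :=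
      (((g_cont 2).measurable.comp
        (MeasurableEquiv.finTwoArrow (α := ℝ)).symm.measurable).inv).ennreal_ofReal
    rw [MeasureTheory.Measure.volume_eq_prod, ← MeasureTheory.Measure.prod_restrict,
      MeasureTheory.lintegral_prod _ hmeasg.aemeasurable]
    have inner_ge : ∀ x ∈ Set.Ioo (0:ℝ) 1,
        ENNReal.ofReal ((8*Real.pi^2)⁻¹ * x ^ (-1:ℝ))
          ≤ ∫⁻ y in Set.Ioo (0:ℝ) 1,
              ENNReal.ofReal ((g 2 ((MeasurableEquiv.finTwoArrow (α := ℝ)).symm (x, y)))⁻¹) := by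
      intro x hx
      have hx0 : (0:ℝ) < x := hx.1
      have hstep : ∀ y ∈ Set.Ioo (0:ℝ) x,
          ENNReal.ofReal ((8*Real.pi^2*x^2)⁻¹)
            ≤ ENNReal.ofReal ((g 2 ((MeasurableEquiv.finTwoArrow (α := ℝ)).symm (x, y)))⁻¹) := by
        intro y hy
        rw [hgval x y]
        apply ENNReal.ofReal_le_ofReal
        apply inv_anti₀
        · have h1 := one_sub_cos_pos hx
          have h2 := sub_nonneg.2 (Real.cos_le_one (2*Real.pi*y))
          linarith
        · have h1 := one_sub_cos_le (x := x)
          have h2 := one_sub_cos_le (x := y)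
          have h3 : Real.pi^2 * y^2 ≤ Real.pi^2 * x^2 :=
            mul_le_mul_of_nonneg_left (pow_le_pow_left₀ hy.1.le hy.2.le 2) (sq_nonneg Real.pi)
          linarith
      calc ENNReal.ofReal ((8*Real.pi^2)⁻¹ * x ^ (-1:ℝ))
          = ENNReal.ofReal ((8*Real.pi^2*x^2)⁻¹) * volume (Set.Ioo (0:ℝ) x) := by
            rw [Real.volume_Ioo, sub_zero, ← ENNReal.ofReal_mul (by positivity)]
            congr 1
            rw [rpow_neg_one_eq hx0]
            field_simp
        _ = ∫⁻ _ in Set.Ioo (0:ℝ) x, ENNReal.ofReal ((8*Real.pi^2*x^2)⁻¹) := by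
            rw [MeasureTheory.setLIntegral_const]
        _ ≤ ∫⁻ y in Set.Ioo (0:ℝ) x,
              ENNReal.ofReal ((g 2 ((MeasurableEquiv.finTwoArrow (α := ℝ)).symm (x, y)))⁻¹) :=
            setLIntegral_mono' measurableSet_Ioo hstep
        _ ≤ _ := lintegral_mono_set (Set.Ioo_subset_Ioo_right hx.2.le)
    have hne : ENNReal.ofReal ((8*Real.pi^2)⁻¹) ≠ 0 := by
      simp only [ne_eq, ENNReal.ofReal_eq_zero, not_le]; positivity
    calc (⊤:ℝ≥0∞) = ENNReal.ofReal ((8*Real.pi^2)⁻¹)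
          * ∫⁻ x in Set.Ioo (0:ℝ) 1, ENNReal.ofReal (x ^ (-1:ℝ)) := by
          rw [lint_rpow_top (le_refl (-1:ℝ)), ENNReal.mul_top hne]
      _ = ∫⁻ x in Set.Ioo (0:ℝ) 1,
            ENNReal.ofReal ((8*Real.pi^2)⁻¹) * ENNReal.ofReal (x ^ (-1:ℝ)) :=
          (lintegral_const_mul' _ _ ENNReal.ofReal_ne_top).symm
      _ = ∫⁻ x in Set.Ioo (0:ℝ) 1, ENNReal.ofReal ((8*Real.pi^2)⁻¹ * x ^ (-1:ℝ)) :=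
          lintegral_congr fun x => (ENNReal.ofReal_mul (by positivity)).symm
      _ ≤ _ := setLIntegral_mono' measurableSet_Ioo inner_ge
  have : ∫⁻ k in Om 2, ENNReal.ofReal ((g 2 k)⁻¹) = ⊤ := by rw [← htrans]; exact htop
  exact this

end Stmt12Aux

open Stmt12Aux in
/-- If `d ∈ {1,2}` and `κ > 0`, or `d ≥ 3` and `0 < κ < κ_c`, there is a unique `m > 0` with
`∫_{[0,1)^d} dk / (m + 2 Σ_j (1 − cos(2π k_j))) = 4κ`. -/
theorem stmt12 (d : ℕ) (hd : 1 ≤ d) (κ : ℝ)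
    (h : ((d = 1 ∨ d = 2) ∧ 0 < κ) ∨ (3 ≤ d ∧ 0 < κ ∧ κ < kcrit d)) :
    ∃! m : ℝ, 0 < m ∧
      (∫ k in Set.univ.pi fun _ : Fin d => Set.Ico (0 : ℝ) 1,
          (m + 2 * ∑ j : Fin d, (1 - Real.cos (2 * Real.pi * k j)))⁻¹)
        = 4 * κ := by
  have hκ : 0 < κ := by rcases h with ⟨_, hκ⟩ | ⟨_, hκ, _⟩ <;> exact hκ
  -- rewrite the statement in terms of F
  have hFdef : ∀ m : ℝ,
      (∫ k in Set.univ.pi fun _ : Fin d => Set.Ico (0 : ℝ) 1,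
          (m + 2 * ∑ j : Fin d, (1 - Real.cos (2 * Real.pi * k j)))⁻¹) = F d m := fun m => rfl
  have hJ : ENNReal.ofReal (4*κ) < J d := by
    rcases h with ⟨hd12, hκ'⟩ | ⟨h3, hκ', hlt⟩
    · rcases hd12 with h1 | h2
      · subst h1; rw [J_top_d1]; exact ENNReal.ofReal_lt_top
      · subst h2; rw [J_top_d2]; exact ENNReal.ofReal_lt_top
    · exact J_gt_of_kcrit d hd h3 hκ' hlt
  obtain ⟨a, ha, haF⟩ := exists_big d hd (by linarith : (0:ℝ) ≤ 4*κ) hJ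
  -- upper point: M with F M ≤ 4κ
  set M : ℝ := max a (4*κ)⁻¹ with hM
  have hM0 : 0 < M := lt_of_lt_of_le ha (le_max_left _ _)
  have hFM : F d M ≤ 4*κ := by
    have hle : F d M ≤ M⁻¹ := by
      rw [F]
      calc ∫ k in Om d, (M + g d k)⁻¹ ≤ ∫ _ in Om d, M⁻¹ := by
            apply MeasureTheory.setIntegral_mono_on (integrable_fm d hM0)
              (integrableOn_const (by rw [vol_Om]; exact ENNReal.one_ne_top) enorm_ne_top)
              (meas_Om d)
            intro k _
            exact inv_anti₀ hM0 (by linarith [g_nonneg d k])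
        _ = M⁻¹ := by
            rw [MeasureTheory.setIntegral_const, smul_eq_mul, measureReal_def, vol_Om]
            simp
    have : M⁻¹ ≤ 4*κ := by
      rw [← inv_inv (4*κ)]
      exact inv_anti₀ (by positivity) (le_max_right _ _)
    linarith
  have haM : a ≤ M := le_max_left _ _
  -- IVT on [a, M]
  have hcont : ContinuousOn (F d) (Set.Icc a M) := fun x hx =>
    (F_contAt d (lt_of_lt_of_le ha hx.1)).continuousWithinAt
  have hIcc : (4*κ) ∈ Set.Icc (F d M) (F d a) := ⟨hFM, le_of_lt haF⟩
  obtain ⟨m, hmIcc, hmF⟩ := intermediate_value_Icc' haM hcont hIcc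
  have hm0 : 0 < m := lt_of_lt_of_le ha hmIcc.1
  refine ⟨m, ⟨hm0, by rw [hFdef]; exact hmF⟩, ?_⟩
  rintro m' ⟨hm'0, hm'F⟩
  rw [hFdef] at hm'F
  by_contra hne
  rcases lt_or_gt_of_ne hne with hlt | hlt
  · have := F_anti d hm'0 hm0 hlt
    rw [hm'F, hmF] at this; exact lt_irrefl _ this
  · have := F_anti d hm0 hm'0 hlt
    rw [hm'F, hmF] at this; exact lt_irrefl _ this
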